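/- Let N = 2^p − 1 and p = 2^q − 1 both be primes, and set k_l = 1 + 2 + 2^(2^1) + 2^(2^2) + ... + 2^(2^(q−1)) and k_b = 2 + 2^(2^1) + 2^(2^2) + ... + 2^(2^(q−1)) (so k_l = 1 + k_b). Assume N does not divide k_b, and let r be a positive integer with k_l + r·k_b ≡ 0 (mod N). Then for all positive integers k and all i ≥ 0, N divides 1 + 2^(2^(qk)) + 2^(2^(qk+1)) + ... + 2^(2^(qk+m)) where m = (q−1) + r·q + i·q·(2^p − 1). -/

import Mathlib

/-!
Since `2 ^ p ≡ 1 (mod N)` and `2 ^ q ≡ 1 (mod p)`, the residue of `2 ^ (2 ^ a)` modulo `N` depends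
only on `a mod q`. The summands therefore repeat with period `q`, and the `q * (1 + r + i * N)`
summands split into `1 + r + i * N` full periods, each contributing `k_b`. The whole expression is
thus `1 + (1 + r + i * N) * k_b = (k_l + r * k_b) + i * N * k_b ≡ 0 (mod N)`.
-/

open Finset Function

theorem ZMod.natCast_pow_eq_one {b : ℕ} (hb : 0 < b) (n : ℕ) : ((b : ZMod (b ^ n - 1))) ^ n = 1 := by
  have h := ZMod.natCast_self (b ^ n - 1)
  rw [Nat.cast_sub (Nat.one_le_pow _ _ hb)] at h
  push_cast at h
  exact sub_eq_zero.mp h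

theorem pow_pow_periodic {M : Type*} [Monoid M] {x : M} {b q : ℕ} (hb : 0 < b)
    (hx : x ^ (b ^ q - 1) = 1) : Periodic (fun a => x ^ b ^ a) q := by
  intro a
  have hexp : (b : ZMod (b ^ q - 1)) ^ (a + q) = (b : ZMod (b ^ q - 1)) ^ a := by
    rw [pow_add, ZMod.natCast_pow_eq_one hb, mul_one]
  show x ^ b ^ (a + q) = x ^ b ^ a
  rw [pow_eq_pow_mod _ hx, pow_eq_pow_mod (b ^ a) hx,
    (ZMod.natCast_eq_natCast_iff' _ _ _).mp (by exact_mod_cast hexp)]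

theorem Function.Periodic.sum_range_mul {M : Type*} [AddCommMonoid M] {f : ℕ → M} {q : ℕ}
    (hf : Periodic f q) (c : ℕ) : ∑ j ∈ range (q * c), f j = c • ∑ j ∈ range q, f j := by
  induction c with
  | zero => simp
  | succ c ih =>
    rw [Nat.mul_succ, sum_range_add, ih, succ_nsmul]
    congr 1
    refine sum_congr rfl fun j _ => ?_
    rw [add_comm, mul_comm]
    exact hf.nat_mul c j

theorem stmt_18_general (p q : ℕ) (hq : Nat.Prime q) (hpq : p = 2 ^ q - 1)
    (kb kl : ℕ) (hkb : kb = ∑ j ∈ Finset.range q, 2 ^ (2 ^ j))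
    (hkl : kl = 1 + kb)
    (r : ℕ) (hrc : (2 ^ p - 1) ∣ kl + r * kb) :
    ∀ k i : ℕ, 0 < k →
      (2 ^ p - 1) ∣
        1 + ∑ j ∈ Finset.range ((q - 1) + r * q + i * q * (2 ^ p - 1) + 1),
          2 ^ (2 ^ (q * k + j)) := by
  intro k i _
  set N := 2 ^ p - 1
  have hx : (2 : ZMod N) ^ (2 ^ q - 1) = 1 := by
    simpa [← hpq] using ZMod.natCast_pow_eq_one two_pos p
  have hper := pow_pow_periodic two_pos hx
  have hshift (j : ℕ) : (2 : ZMod N) ^ 2 ^ (q * k + j) = 2 ^ 2 ^ j := by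
    rw [add_comm, mul_comm]
    exact hper.nat_mul k j
  have hlen : (q - 1) + r * q + i * q * N + 1 = q * (1 + r + i * N) := by
    obtain ⟨n, rfl⟩ := Nat.exists_eq_add_one_of_ne_zero hq.ne_zero
    simp only [Nat.add_sub_cancel]
    ring
  rw [← ZMod.natCast_eq_zero_iff] at hrc ⊢
  push_cast [hkl, hkb] at hrc ⊢
  simp only [hlen, hshift, hper.sum_range_mul, nsmul_eq_mul]
  push_cast
  rw [ZMod.natCast_self]
  linear_combination hrc

theorem stmt_18 (p q : ℕ) (hq : Nat.Prime q) (hpq : p = 2 ^ q - 1)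
    (hp : Nat.Prime p) (hN : Nat.Prime (2 ^ p - 1))
    (kb kl : ℕ) (hkb : kb = ∑ j ∈ Finset.range q, 2 ^ (2 ^ j))
    (hkl : kl = 1 + kb)
    (hnd : ¬ (2 ^ p - 1) ∣ kb)
    (r : ℕ) (hr : 0 < r) (hrc : (2 ^ p - 1) ∣ kl + r * kb) :
    ∀ k i : ℕ, 0 < k →
      (2 ^ p - 1) ∣
        1 + ∑ j ∈ Finset.range ((q - 1) + r * q + i * q * (2 ^ p - 1) + 1),
          2 ^ (2 ^ (q * k + j)) :=
  stmt_18_general p q hq hpq kb kl hkb hkl r hrc
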